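/- Let i be a nonnegative integer and let α, γ be complex numbers with α+2+i ≠ 0. Assume that (2α+4+2i)_{m+n} and (γ/2)_n are nonzero for all nonnegative integers m, n, that no argument of Γ appearing on the right-hand side below is a nonpositive integer, and that the double series defining the Kampé de Fériet function converges absolutely. Then F^{2:0;1}_{1:0;1}[α, γ : — ; γ/2+1 ; 2α+4+2i : — ; γ/2 ; −1, 1] = ((−1)^i · 2^{i+2}) / ((α+2+i) · (i+1)!) · Σ_{r=0}^{i} (−1)^r · C(i,r) · Γ((α+i+r+3)/2) / Γ((α−i+r+1)/2). -/

import Mathlib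

/-!
On the antidiagonal `m + n = N` the identity `(c + 1)_n / (c)_n = (c + n) / c`, with `c = γ / 2`,
turns the term of the series into a common factor times `(-1)^n C(N, n) (c + n)`. An alternating
binomial sum of a polynomial of degree `< N` vanishes, so only `N ≤ 1` survives and the series equals
`1 + α γ / (β c) = (2α + 2 + i) / (α + 2 + i)`.

On the right, `Γ(z + i + 1) / Γ(z) = (z)_{i+1}` with `z = (α - i + r + 1) / 2`, a polynomial of
degree `i + 1` in `r`. Its `i`-th alternating binomial sum follows from `(x)_{m+1} = (x)_m (x + m)`
and `r C(i + 1, r) = (i + 1) C(i, r - 1)`, which together lower `i` and `m` at once.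
-/

open Complex

noncomputable section

/-- Pochhammer symbol `(a)_n = a (a+1) ⋯ (a+n-1)`. -/
def poch (a : ℂ) (n : ℕ) : ℂ := ∏ k ∈ Finset.range n, (a + k)

/-- `z` is not a nonpositive integer. -/
def notNonposInt (z : ℂ) : Prop := ∀ n : ℕ, z ≠ -(n : ℂ)

/-- Term of the Kampé de Fériet double series `F^{2:0;1}_{1:0;1}`. -/
def kdfTerm (h₁ h₂ b₁ β d₁ x y : ℂ) (p : ℕ × ℕ) : ℂ :=
  poch h₁ (p.1 + p.2) * poch h₂ (p.1 + p.2) * poch b₁ p.2 /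
    (poch β (p.1 + p.2) * poch d₁ p.2) * x ^ p.1 * y ^ p.2 /
    ((p.1.factorial : ℂ) * (p.2.factorial : ℂ))

open Finset

section AlternatingSum

variable {R : Type*} [CommRing R]

lemma sum_range_neg_one_pow_mul_choose (i : ℕ) (hi : i ≠ 0) :
    ∑ r ∈ range (i + 1), (-1 : R) ^ r * (i.choose r : R) = 0 := by
  simpa [zero_pow hi, mul_comm] using (add_pow (-1 : R) 1 i).symm

lemma sum_range_neg_one_pow_mul_choose_mul_cast_mul (i : ℕ) (f : ℕ → R) :
    ∑ r ∈ range (i + 2), (-1 : R) ^ r * ((i + 1).choose r : R) * (r * f r) =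
      -((i + 1) * ∑ s ∈ range (i + 1), (-1 : R) ^ s * (i.choose s : R) * f (s + 1)) := by
  rw [sum_range_succ', mul_sum, ← sum_neg_distrib]
  simp only [Nat.cast_zero, zero_mul, mul_zero, add_zero]
  refine sum_congr rfl fun s _ => ?_
  have hR : ((i : R) + 1) * (i.choose s : R) = ((i + 1).choose (s + 1) : R) * ((s : R) + 1) := by
    simpa using congrArg (Nat.cast : ℕ → R) (Nat.add_one_mul_choose_eq i s)
  push_cast
  linear_combination (-1 : R) ^ s * f (s + 1) * hR

/-- `(-1)^i` times the `i`-th forward difference with step `h` of `x ↦ (x)_m`, taken at `z`. -/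
def altChooseSum (i m : ℕ) (h z : R) : R :=
  ∑ r ∈ range (i + 1), (-1) ^ r * (i.choose r : R) * (ascPochhammer R m).eval (z + r * h)

lemma altChooseSum_succ_succ (i m : ℕ) (h z : R) :
    altChooseSum (i + 1) (m + 1) h z =
      (z + m) * altChooseSum (i + 1) m h z - (i + 1) * h * altChooseSum i m h (z + h) := by
  have hsplit : ∀ r ∈ range (i + 2),
      (-1) ^ r * ((i + 1).choose r : R) * (ascPochhammer R (m + 1)).eval (z + r * h) =
        (z + m) * ((-1) ^ r * ((i + 1).choose r : R) * (ascPochhammer R m).eval (z + r * h)) +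
        h * ((-1) ^ r * ((i + 1).choose r : R) * (r * (ascPochhammer R m).eval (z + r * h))) :=
    fun r _ => by rw [ascPochhammer_succ_eval]; ring
  rw [altChooseSum, sum_congr rfl hsplit, sum_add_distrib, ← mul_sum, ← mul_sum,
    sum_range_neg_one_pow_mul_choose_mul_cast_mul i (fun r => (ascPochhammer R m).eval (z + r * h)),
    altChooseSum, altChooseSum]
  push_cast
  simp only [add_mul, one_mul, ← add_assoc, add_right_comm z h]
  ring

lemma altChooseSum_eq_zero_of_lt {i m : ℕ} (him : m < i) (h z : R) :
    altChooseSum i m h z = 0 := by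
  induction m generalizing i z with
  | zero =>
    simpa [altChooseSum] using sum_range_neg_one_pow_mul_choose (R := R) i (by omega)
  | succ m ih =>
    obtain ⟨j, rfl⟩ : ∃ j, i = j + 1 := ⟨i - 1, by omega⟩
    rw [altChooseSum_succ_succ, ih (by omega), ih (by omega)]
    ring

lemma altChooseSum_self (i : ℕ) (h z : R) : altChooseSum i i h z = (-h) ^ i * i.factorial := by
  induction i generalizing z with
  | zero => simp [altChooseSum]
  | succ i ih =>
    rw [altChooseSum_succ_succ, altChooseSum_eq_zero_of_lt (by omega), ih, Nat.factorial_succ]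
    push_cast
    ring

lemma two_mul_altChooseSum_succ_self (i : ℕ) (h z : R) :
    2 * altChooseSum i (i + 1) h z = (-h) ^ i * (i + 1).factorial * (2 * z + i * (h + 1)) := by
  induction i generalizing z with
  | zero => simp [altChooseSum]
  | succ i ih =>
    rw [altChooseSum_succ_succ, altChooseSum_self, Nat.factorial_succ (i + 1)]
    push_cast
    linear_combination (-(i + 1) * h) * ih (z + h)

end AlternatingSum

lemma poch_eq_eval_ascPochhammer (a : ℂ) (n : ℕ) : poch a n = (ascPochhammer ℂ n).eval a := by
  induction n with
  | zero => simp [poch]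
  | succ n ih => rw [poch, prod_range_succ, ← poch, ih, ascPochhammer_succ_eval]

lemma poch_add_one_mul (c : ℂ) (n : ℕ) : poch (c + 1) n * c = poch c n * (c + n) := by
  simp only [poch_eq_eval_ascPochhammer, ← ascPochhammer_succ_eval, ascPochhammer_succ_left,
    Polynomial.eval_mul, Polynomial.eval_comp, Polynomial.eval_X, Polynomial.eval_add,
    Polynomial.eval_one]
  ring

theorem Summable.tsum_eq_tsum_sum_antidiagonal {E : Type*} [AddCommMonoid E] [TopologicalSpace E]
    [ContinuousAdd E] [T3Space E] {f : ℕ × ℕ → E} (hf : Summable f) :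
    ∑' p, f p = ∑' n, ∑ p ∈ antidiagonal n, f p := by
  rw [← HasAntidiagonal.sigmaAntidiagonalEquivProd.tsum_eq f]
  refine ((HasAntidiagonal.sigmaAntidiagonalEquivProd.summable_iff).mpr hf).tsum_sigma'
    (fun n => (hasSum_fintype _).summable) |>.trans ?_
  exact tsum_congr fun n => (tsum_fintype _).trans (sum_coe_sort _ _)

lemma kdfTerm_neg_one_one (a b c β : ℂ) (hc : c ≠ 0) (m n : ℕ) (hcn : poch c n ≠ 0) :
    kdfTerm a b (c + 1) β c (-1) 1 (m, n) =
      (-1) ^ (m + n) * poch a (m + n) * poch b (m + n) / (poch β (m + n) * c * (m + n).factorial) *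
        ((-1) ^ n * ((m + n).choose n : ℂ) * (c + n)) := by
  have hfact : ((m + n).choose n : ℂ) * m.factorial * n.factorial = (m + n).factorial := by
    exact_mod_cast Nat.add_choose_mul_factorial_mul_factorial m n
  have hsign : (-1 : ℂ) ^ m = (-1) ^ (m + n) * (-1) ^ n := by
    rw [pow_add, mul_assoc, ← pow_add, ← two_mul, pow_mul]; norm_num
  have hratio : poch (c + 1) n / (poch c n * (m.factorial * n.factorial)) =
      ((m + n).choose n : ℂ) * (c + n) / (c * (m + n).factorial) := by
    have hfac (k : ℕ) : (k.factorial : ℂ) ≠ 0 := Nat.cast_ne_zero.mpr k.factorial_ne_zero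
    rw [div_eq_div_iff (by simp [hcn, hfac]) (by simp [hc, hfac])]
    linear_combination ((m + n).factorial : ℂ) * poch_add_one_mul c n - poch c n * (c + n) * hfact
  calc kdfTerm a b (c + 1) β c (-1) 1 (m, n)
      = (-1) ^ m * poch a (m + n) * poch b (m + n) / poch β (m + n) *
          (poch (c + 1) n / (poch c n * (m.factorial * n.factorial))) := by
        simp only [kdfTerm, one_pow]; ring
    _ = _ := by rw [hratio, hsign]; ring

lemma sum_antidiagonal_kdfTerm_neg_one_one (a b c β : ℂ) (hc : ∀ n, poch c n ≠ 0) (N : ℕ) :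
    ∑ p ∈ antidiagonal N, kdfTerm a b (c + 1) β c (-1) 1 p =
      (-1) ^ N * poch a N * poch b N / (poch β N * c * N.factorial) * altChooseSum N 1 1 c := by
  have hc0 : c ≠ 0 := by simpa [poch] using hc 1
  rw [altChooseSum, mul_sum, ← sum_range_reflect, Nat.sum_antidiagonal_eq_sum_range_succ_mk]
  refine sum_congr rfl fun k hk => ?_
  have hkN : k ≤ N := Nat.lt_succ_iff.mp (mem_range.mp hk)
  rw [kdfTerm_neg_one_one a b c β hc0 k (N - k) (hc _), Nat.add_sub_cancel' hkN,
    show N + 1 - 1 - k = N - k by omega]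
  simp

lemma tsum_kdfTerm_neg_one_one (a b c β : ℂ) (hc : ∀ n, poch c n ≠ 0)
    (hsum : Summable (kdfTerm a b (c + 1) β c (-1) 1)) :
    ∑' p, kdfTerm a b (c + 1) β c (-1) 1 p = 1 + a * b / (β * c) := by
  have hc0 : c ≠ 0 := by simpa [poch] using hc 1
  have hvanish : ∀ N ∉ range 2,
      (-1) ^ N * poch a N * poch b N / (poch β N * c * N.factorial) * altChooseSum N 1 1 c = 0 :=
    fun N hN => by rw [altChooseSum_eq_zero_of_lt (by simpa using hN), mul_zero]
  rw [hsum.tsum_eq_tsum_sum_antidiagonal]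
  simp only [sum_antidiagonal_kdfTerm_neg_one_one a b c β hc]
  rw [tsum_eq_sum hvanish]
  simp [altChooseSum, poch, sum_range_succ, hc0, neg_div]

lemma sum_Gamma_div_Gamma_eq_altChooseSum (i : ℕ) (α : ℂ)
    (hΓ : ∀ r ≤ i, notNonposInt ((α - i + r + 1) / 2)) :
    ∑ r ∈ range (i + 1), (-1 : ℂ) ^ r * (i.choose r : ℂ) *
        Gamma ((α + i + r + 3) / 2) / Gamma ((α - i + r + 1) / 2) =
      altChooseSum i (i + 1) (1 / 2) ((α - i + 1) / 2) := by
  refine sum_congr rfl fun r hr => ?_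
  have hshift : (α + i + r + 3) / 2 = (α - i + r + 1) / 2 + ((i + 1 : ℕ) : ℂ) := by push_cast; ring
  rw [mul_div_assoc, hshift,
    Gamma_add_nat_div_Gamma_eq _ (hΓ r (Nat.lt_succ_iff.mp (mem_range.mp hr)))]
  ring_nf

theorem stmt_16_general (i : ℕ) (α γ : ℂ)
    (hne : α + 2 + (i : ℂ) ≠ 0)
    (hd : ∀ n : ℕ, poch (γ / 2) n ≠ 0)
    (hΓs : ∀ r : ℕ, r ≤ i →
      notNonposInt ((α + (i : ℂ) + (r : ℂ) + 3) / 2) ∧ notNonposInt ((α - (i : ℂ) + (r : ℂ) + 1) / 2))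
    (hsum : Summable fun p : ℕ × ℕ => ‖kdfTerm α γ (γ / 2 + 1) (2 * α + 4 + 2 * (i : ℂ)) (γ / 2) (-1) 1 p‖) :
    (∑' p : ℕ × ℕ, kdfTerm α γ (γ / 2 + 1) (2 * α + 4 + 2 * (i : ℂ)) (γ / 2) (-1) 1 p) =
      (-1 : ℂ) ^ i * (2 : ℂ) ^ (((i : ℂ)) + 2) / ((α + 2 + (i : ℂ)) * ((i + 1).factorial : ℂ)) *
      ∑ r ∈ Finset.range (i + 1), (-1 : ℂ) ^ r * (i.choose r : ℂ) *
        Gamma ((α + (i : ℂ) + (r : ℂ) + 3) / 2) /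
        Gamma ((α - (i : ℂ) + (r : ℂ) + 1) / 2) := by
  have hγ : γ ≠ 0 := by simpa [poch] using hd 1
  rw [tsum_kdfTerm_neg_one_one _ _ _ _ hd hsum.of_norm,
    sum_Gamma_div_Gamma_eq_altChooseSum i α fun r hr => (hΓs r hr).2]
  have hpow : (2 : ℂ) ^ ((i : ℂ) + 2) = 2 ^ (i + 2) := by norm_cast
  have hsign : (-1 : ℂ) ^ i * (-1) ^ i = 1 := by rw [← mul_pow]; norm_num
  have hfact : ((i + 1).factorial : ℂ) ≠ 0 := Nat.cast_ne_zero.mpr (i + 1).factorial_ne_zero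
  have hS := two_mul_altChooseSum_succ_self i (1 / 2 : ℂ) ((α - i + 1) / 2)
  rw [neg_pow, one_div_pow] at hS
  field_simp at hS
  rw [hpow, show 2 * α + 4 + 2 * (i : ℂ) = 2 * (α + 2 + i) by ring]
  field_simp
  linear_combination (-(-1 : ℂ) ^ i) * hS - ((i + 1).factorial : ℂ) * (2 * α + 2 + i) * hsign

theorem stmt_16 (i : ℕ) (α γ : ℂ)
    (hne : α + 2 + (i : ℂ) ≠ 0)
    (hβ : ∀ m n : ℕ, poch (2 * α + 4 + 2 * (i : ℂ)) (m + n) ≠ 0)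
    (hd : ∀ n : ℕ, poch (γ / 2) n ≠ 0)
    (hΓs : ∀ r : ℕ, r ≤ i →
      notNonposInt ((α + (i : ℂ) + (r : ℂ) + 3) / 2) ∧ notNonposInt ((α - (i : ℂ) + (r : ℂ) + 1) / 2))
    (hsum : Summable fun p : ℕ × ℕ => ‖kdfTerm α γ (γ / 2 + 1) (2 * α + 4 + 2 * (i : ℂ)) (γ / 2) (-1) 1 p‖) :
    (∑' p : ℕ × ℕ, kdfTerm α γ (γ / 2 + 1) (2 * α + 4 + 2 * (i : ℂ)) (γ / 2) (-1) 1 p) =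
      (-1 : ℂ) ^ i * (2 : ℂ) ^ (((i : ℂ)) + 2) / ((α + 2 + (i : ℂ)) * ((i + 1).factorial : ℂ)) *
      ∑ r ∈ Finset.range (i + 1), (-1 : ℂ) ^ r * (i.choose r : ℂ) *
        Gamma ((α + (i : ℂ) + (r : ℂ) + 3) / 2) /
        Gamma ((α - (i : ℂ) + (r : ℂ) + 1) / 2) :=
  stmt_16_general i α γ hne hd hΓs hsum
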